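/- For integers 1 ≤ m ≤ n and an indeterminate λ, the identity sum_{i=m}^{n} sum_{j=m}^{i} (-1)^{n+i} [n,i] C(i,j) {j,m} λ^{i-j} 2^{n-j} = (n!/m!) * sum_{ℓ=m}^{n} (m/ℓ) C(λ, n-ℓ) C(-ℓ, ℓ-m) 2^{m+n-2ℓ} holds in ℚ[λ]. -/

import Mathlib

open Finset

/-- Unsigned Stirling numbers of the first kind. -/
def stirling1 : ℕ → ℕ → ℕ
  | 0, 0 => 1
  | 0, _ + 1 => 0
  | _ + 1, 0 => 0
  | n + 1, k + 1 => n * stirling1 n (k + 1) + stirling1 n k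

/-- Stirling numbers of the second kind. -/
def stirling2 : ℕ → ℕ → ℕ
  | 0, 0 => 1
  | 0, _ + 1 => 0
  | _ + 1, 0 => 0
  | n + 1, k + 1 => (k + 1) * stirling2 n (k + 1) + stirling2 n k

/-- Generalized binomial coefficient `C(x, r) = x(x-1)⋯(x-r+1)/r!` in a ℚ-algebra. -/
noncomputable def gchoose {R : Type*} [CommRing R] [Algebra ℚ R] (x : R) (r : ℕ) : R :=
  algebraMap ℚ R ((r.factorial : ℚ)⁻¹) * ∏ i ∈ Finset.range r, (x - i)

/-!
Write `m! {j, m}` as the `m`-th forward difference of `y ↦ y ^ j` at `0`. By the binomial theorem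
and the Stirling expansion of the falling factorial, `m!` times the left-hand side becomes the
`m`-th difference at `0` of `y ↦ 2 ^ n n! C(y/2 + λ, n)`. Chu–Vandermonde splits this into
`∑ₓ C(λ, n - x) Δᵐ C(y/2, x)|₀`. These differences vanish for `x < m` (a polynomial of degree `x`),
and for `m ≤ x` they satisfy `x 4ˣ Δᵐ C(y/2, x)|₀ = m 2ᵐ C(-x, x - m)`, by a two-step induction
on `m` from `Δ² = (E² - 1) - 2Δ` (`E` the unit shift) and Pascal's rule
`C(y/2 + 1, x + 1) - C(y/2, x + 1) = C(y/2, x)`.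
-/

open Polynomial fwdDiff
open scoped Nat

theorem stirling1_eq_stirlingFirst : stirling1 = Nat.stirlingFirst := by
  funext n k
  induction n generalizing k with
  | zero => cases k <;> rfl
  | succ n ih => cases k <;> simp [stirling1, Nat.stirlingFirst, ih]

theorem stirling2_eq_stirlingSecond : stirling2 = Nat.stirlingSecond := by
  funext n k
  induction n generalizing k with
  | zero => cases k <;> rfl
  | succ n ih => cases k <;> simp [stirling2, Nat.stirlingSecond, ih]

theorem sum_Icc_eq_sum_range_of_eq_zero {M : Type*} [AddCommMonoid M] {f : ℕ → M} {m : ℕ}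
    (n : ℕ) (hf : ∀ j < m, f j = 0) : ∑ j ∈ Icc m n, f j = ∑ j ∈ range (n + 1), f j := by
  refine sum_subset (fun j hj => mem_range.mpr (Nat.lt_succ_of_le (mem_Icc.mp hj).2))
    fun j hj hjm => hf j ?_
  by_contra hmj
  exact hjm (mem_Icc.mpr ⟨not_lt.mp hmj, Nat.le_of_lt_succ (mem_range.mp hj)⟩)

theorem ascPochhammer_eval_eq_sum_stirlingFirst {S : Type*} [CommSemiring S] (n : ℕ) (x : S) :
    (ascPochhammer S n).eval x = ∑ i ∈ range (n + 1), (Nat.stirlingFirst n i : S) * x ^ i := by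
  induction n with
  | zero => simp
  | succ n ih =>
    set A := ∑ i ∈ range (n + 1), (Nat.stirlingFirst n i : S) * x ^ i
    set B := ∑ i ∈ range n, (Nat.stirlingFirst n (i + 1) : S) * x ^ (i + 1)
    have hA : A = B + Nat.stirlingFirst n 0 := by simp [A, B, sum_range_succ']
    have hB : ∑ i ∈ range (n + 1), (Nat.stirlingFirst n (i + 1) : S) * x ^ (i + 1) = B := by
      simp [B, sum_range_succ, Nat.stirlingFirst_eq_zero_of_lt]
    have hrec : ∑ i ∈ range (n + 1), (Nat.stirlingFirst (n + 1) (i + 1) : S) * x ^ (i + 1) =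
        n * B + x * A := by
      rw [← hB, mul_sum, mul_sum, ← sum_add_distrib]
      refine sum_congr rfl fun i _ => ?_
      rw [Nat.stirlingFirst_succ_succ]
      push_cast
      ring
    have hzero : (n : S) * Nat.stirlingFirst n 0 = 0 := by cases n <;> simp
    rw [ascPochhammer_succ_eval, ih, sum_range_succ' _ (n + 1), hrec, Nat.stirlingFirst_succ_zero,
      Nat.cast_zero, zero_mul, add_zero, hA]
    calc (B + Nat.stirlingFirst n 0) * (x + n)
        = n * B + x * (B + Nat.stirlingFirst n 0) + n * Nat.stirlingFirst n 0 := by ring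
      _ = _ := by rw [hzero, add_zero]

theorem descPochhammer_eval_eq_sum_stirlingFirst {R : Type*} [CommRing R] (n : ℕ) (x : R) :
    (descPochhammer R n).eval x =
      ∑ i ∈ range (n + 1), (-1) ^ (n + i) * (Nat.stirlingFirst n i : R) * x ^ i := by
  have h := ascPochhammer_eval_neg_eq_descPochhammer R x n
  rw [ascPochhammer_eval_eq_sum_stirlingFirst] at h
  calc (descPochhammer R n).eval x = (-1) ^ n * ((-1) ^ n * (descPochhammer R n).eval x) := by
        rw [← mul_assoc, ← pow_add, Even.neg_one_pow ⟨n, rfl⟩, one_mul]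
    _ = _ := by
        rw [← h, mul_sum]
        refine sum_congr rfl fun i _ => ?_
        rw [pow_add, neg_pow x]
        ring

theorem descPochhammer_eval_eq_factorial_mul_choose {K : Type*} [Field K] [CharZero K] (n : ℕ)
    (x : K) : (descPochhammer K n).eval x = n ! * Ring.choose x n := by
  rw [← nsmul_eq_mul, ← Ring.descPochhammer_eq_factorial_smul_choose, ← aeval_eq_smeval,
    aeval_def, ← eval_map, descPochhammer_map]

theorem gchoose_eq_choose {K : Type*} [Field K] [CharZero K] [Algebra ℚ K] (x : K) (n : ℕ) :
    gchoose x n = Ring.choose x n := by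
  rw [gchoose, ← descPochhammer_eval_eq_prod_range, descPochhammer_eval_eq_factorial_mul_choose]
  simp [Nat.factorial_ne_zero]

namespace Ring

variable {K : Type*} [Field K] [CharZero K]

theorem choose_succ_right_eq (r : K) (k : ℕ) :
    choose r (k + 1) * (k + 1) = choose r k * (r - k) := by
  have h := choose_smul_choose r (k.le_add_right 1)
  simp only [Nat.choose_succ_self_right, add_tsub_cancel_left, choose_one_right, nsmul_eq_mul] at h
  push_cast at h
  linear_combination h

theorem choose_succ_mul_eq_mul_choose_sub_one (r : K) (k : ℕ) :
    choose r (k + 1) * (k + 1) = r * choose (r - 1) k := by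
  have h := choose_smul_choose r (Nat.succ_le_succ (Nat.zero_le k))
  simp only [Nat.choose_one_right, choose_one_right, nsmul_eq_mul, Nat.cast_one] at h
  push_cast at h
  linear_combination h

end Ring

section fwdDiff

-- `Δ_[1] ^[n]` needs the space: `]^` is a token of Mathlib's exterior-power notation.

variable {R : Type*} [CommRing R]

theorem fwdDiff_iter_sum_apply {α : Type*} (s : Finset α) (f : α → R → R) (n : ℕ) (x : R) :
    Δ_[1] ^[n] (fun y => ∑ a ∈ s, f a y) x = ∑ a ∈ s, Δ_[1] ^[n] (f a) x := by
  rw [← Finset.sum_fn, fwdDiff_iter_finsetSum, Finset.sum_apply]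

theorem fwdDiff_iter_const_mul_apply (c : R) (f : R → R) (n : ℕ) (x : R) :
    Δ_[1] ^[n] (fun y => c * f y) x = c * Δ_[1] ^[n] f x :=
  congr_fun (fwdDiff_iter_const_smul 1 c f n) x

theorem fwdDiff_iter_apply_add_one (f : R → R) (n : ℕ) (x : R) :
    Δ_[1] ^[n] f (x + 1) = Δ_[1] ^[n] f x + Δ_[1] ^[n + 1] f x := by
  rw [Function.iterate_succ_apply', fwdDiff]
  abel

theorem fwdDiff_iter_add_two_apply (f : R → R) (m : ℕ) (x : R) :
    Δ_[1] ^[m + 2] f x = Δ_[1] ^[m] (fun y => f (y + 1 + 1) - f y) x - 2 * Δ_[1] ^[m + 1] f x := by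
  have h : Δ_[1] (Δ_[1] f) = (fun y => f (y + 1 + 1) - f y) + (-2 : ℤ) • Δ_[1] f := by
    ext y
    simp only [fwdDiff, Pi.add_apply, Pi.smul_apply]
    rw [zsmul_eq_mul]
    push_cast
    ring
  rw [Function.iterate_succ_apply, Function.iterate_succ_apply, h, fwdDiff_iter_add,
    fwdDiff_iter_const_smul, Function.iterate_succ_apply]
  simp only [Pi.add_apply, Pi.smul_apply]
  rw [zsmul_eq_mul]
  push_cast
  ring

theorem fwdDiff_iter_succ_mul_id_apply (f : R → R) (n : ℕ) (x : R) :
    Δ_[1] ^[n + 1] (fun y => y * f y) x =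
      x * Δ_[1] ^[n + 1] f x + (n + 1) * Δ_[1] ^[n] f (x + 1) := by
  induction n generalizing x with
  | zero =>
    simp only [zero_add, Function.iterate_one, Function.iterate_zero, id, fwdDiff, Nat.cast_zero]
    ring
  | succ n ih =>
    rw [Function.iterate_succ_apply']
    simp only [fwdDiff, ih, Function.iterate_succ_apply']
    push_cast
    ring

theorem fwdDiff_iter_pow_apply_zero (j m : ℕ) :
    Δ_[1] ^[m] (fun x : R => x ^ j) 0 = m ! * Nat.stirlingSecond j m := by
  induction j generalizing m with
  | zero =>
    cases m with
    | zero => simp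
    | succ m =>
      simp only [pow_zero]
      rw [Function.iterate_succ_apply, fwdDiff_const, Function.iterate_fixed (fwdDiff_const 1 0)]
      simp
  | succ j ih =>
    cases m with
    | zero => simp
    | succ m =>
      simp only [pow_succ']
      rw [fwdDiff_iter_succ_mul_id_apply, zero_mul, zero_add, fwdDiff_iter_apply_add_one, ih, ih,
        Nat.stirlingSecond_succ_succ, Nat.factorial_succ]
      push_cast
      ring

end fwdDiff

section FieldCharZero

variable {K : Type*} [Field K] [CharZero K]

theorem fwdDiff_iter_add_two_choose_half (m b : ℕ) :
    Δ_[1] ^[m + 2] (fun y : K => Ring.choose (y / 2) (b + 1)) 0 =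
      Δ_[1] ^[m] (fun y : K => Ring.choose (y / 2) b) 0 -
        2 * Δ_[1] ^[m + 1] (fun y : K => Ring.choose (y / 2) (b + 1)) 0 := by
  have hpascal : (fun y : K =>
      Ring.choose ((y + 1 + 1) / 2) (b + 1) - Ring.choose (y / 2) (b + 1)) =
        fun y => Ring.choose (y / 2) b := by
    funext y
    rw [show (y + 1 + 1) / 2 = y / 2 + 1 by ring, Ring.choose_succ_succ, add_sub_cancel_right]
  rw [fwdDiff_iter_add_two_apply, hpascal]

theorem succ_mul_four_pow_succ_mul_choose_inv_two (a : ℕ) :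
    (a + 1) * 4 ^ (a + 1) * Ring.choose (2⁻¹ : K) (a + 1) = 2 * Ring.choose (-(a + 1 : K)) a := by
  induction a with
  | zero => norm_num [Ring.choose_zero_right, Ring.choose_one_right]
  | succ a ih =>
    have hP := Ring.choose_succ_right_eq (-(a + 1 : K)) a
    have hT := Ring.choose_succ_mul_eq_mul_choose_sub_one (-(a + 1 : K)) a
    have hU := Ring.choose_succ_right_eq (-(a + 1 + 1 : K)) a
    have hH := Ring.choose_succ_right_eq (2⁻¹ : K) (a + 1)
    rw [show -((a : K) + 1) - 1 = -(a + 1 + 1) by ring] at hT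
    push_cast at hH ⊢
    apply mul_left_cancel₀ (Nat.cast_add_one_ne_zero a : (a : K) + 1 ≠ 0)
    linear_combination ((a : K) + 1) * 4 ^ (a + 1 + 1) * hH + 4 * (2⁻¹ - (a + 1)) * ih - 2 * hU +
      4 * hT - 4 * hP

theorem mul_four_pow_mul_fwdDiff_iter_choose_half {m b : ℕ} (h : m ≤ b) :
    (b : K) * 4 ^ b * Δ_[1] ^[m] (fun y : K => Ring.choose (y / 2) b) 0 =
      m * 2 ^ m * Ring.choose (-(b : K)) (b - m) := by
  induction m using Nat.twoStepInduction generalizing b with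
  | zero =>
    rcases b.eq_zero_or_pos with rfl | hb
    · simp
    · simp [Ring.choose_zero_pos K hb]
  | one =>
    obtain ⟨a, rfl⟩ := Nat.exists_eq_add_of_le' h
    simp only [Function.iterate_one, fwdDiff, zero_add, zero_div, Ring.choose_zero_succ, sub_zero,
      one_div, Nat.add_sub_cancel]
    push_cast
    rw [succ_mul_four_pow_succ_mul_choose_inv_two]
    ring
  | more m ih0 ih1 =>
    obtain ⟨d, rfl⟩ : ∃ d, b = m + d + 1 + 1 := ⟨b - m - 2, by omega⟩
    have h0 := ih0 (b := m + d + 1) (by omega)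
    have h1 := ih1 (b := m + d + 1 + 1) (by omega)
    rw [show m + d + 1 - m = d + 1 by omega] at h0
    rw [show m + d + 1 + 1 - (m + 1) = d + 1 by omega] at h1
    rw [show m + d + 1 + 1 - (m + 2) = d by omega, fwdDiff_iter_add_two_choose_half]
    have hX := Ring.choose_succ_mul_eq_mul_choose_sub_one (-((m + d + 1 : ℕ) : K)) d
    have hU := Ring.choose_succ_right_eq (-((m + d + 1 + 1 : ℕ) : K)) d
    rw [show -((m + d + 1 : ℕ) : K) - 1 = -((m + d + 1 + 1 : ℕ) : K) by push_cast; ring] at hX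
    push_cast at h0 h1 hX hU ⊢
    have hb : ((m : K) + d + 1) * (d + 1) ≠ 0 := mul_ne_zero
      (by exact_mod_cast Nat.succ_ne_zero (m + d)) (Nat.cast_add_one_ne_zero d)
    apply mul_left_cancel₀ hb
    -- `hX` and `hU` express `C(-b, d + 1)` and `C(-(b + 1), d + 1)` through `C(-(b + 1), d)`.
    linear_combination 4 * ((d : K) + 1) * (m + d + 1 + 1) * h0 -
      2 * ((m : K) + d + 1) * (d + 1) * h1 + 4 * ((m : K) + d + 1 + 1) * m * 2 ^ m * hX -
      2 * ((m : K) + d + 1) * (m + 1) * 2 ^ (m + 1) * hU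

theorem fwdDiff_iter_choose_half_apply_zero {m x : ℕ} (hm : 1 ≤ m) (hmx : m ≤ x) :
    Δ_[1] ^[m] (fun y : K => Ring.choose (y / 2) x) 0 =
      m / x * Ring.choose (-(x : K)) (x - m) * 2 ^ ((m : ℤ) - 2 * x) := by
  have hx : (x : K) ≠ 0 := by exact_mod_cast (by omega : x ≠ 0)
  have hpow : (2 : K) ^ ((m : ℤ) - 2 * x) = 2 ^ m / 4 ^ x := by
    rw [zpow_sub₀ two_ne_zero, zpow_natCast, zpow_mul, zpow_natCast]
    norm_num
  rw [hpow]
  field_simp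
  linear_combination mul_four_pow_mul_fwdDiff_iter_choose_half (K := K) hmx

theorem fwdDiff_iter_choose_half_of_lt {m b : ℕ} (h : b < m) :
    Δ_[1] ^[m] (fun y : K => Ring.choose (y / 2) b) 0 = 0 := by
  have hpoly : (fun y : K => Ring.choose (y / 2) b) = fun y => ∑ i ∈ range (b + 1),
      ((b ! : K)⁻¹ * (-1) ^ (b + i) * Nat.stirlingFirst b i * 2⁻¹ ^ i) * y ^ i := by
    funext y
    rw [(eq_inv_mul_iff_mul_eq₀ (by exact_mod_cast b.factorial_ne_zero)).mpr
        (descPochhammer_eval_eq_factorial_mul_choose b (y / 2)).symm,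
      descPochhammer_eval_eq_sum_stirlingFirst, mul_sum]
    refine sum_congr rfl fun i _ => ?_
    rw [div_eq_mul_inv, mul_pow]
    ring
  rw [hpoly, fwdDiff_iter_sum_apply]
  refine sum_eq_zero fun i hi => ?_
  rw [fwdDiff_iter_const_mul_apply,
    fwdDiff_iter_pow_eq_zero_of_lt (by have := mem_range.mp hi; omega), Pi.zero_apply, mul_zero]

theorem sum_choose_mul_pow_mul_two_pow (y l : K) {i n : ℕ} (hi : i ≤ n) :
    ∑ j ∈ range (i + 1), (i.choose j : K) * l ^ (i - j) * 2 ^ (n - j) * y ^ j =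
      2 ^ n * (y / 2 + l) ^ i := by
  rw [add_pow, mul_sum]
  refine sum_congr rfl fun j hj => ?_
  rw [pow_sub₀ 2 two_ne_zero ((Nat.le_of_lt_succ (mem_range.mp hj)).trans hi), div_pow]
  field_simp

theorem sum_stirlingFirst_mul_sum_choose (y l : K) (n : ℕ) :
    ∑ i ∈ range (n + 1), ∑ j ∈ range (i + 1), (-1) ^ (n + i) * (Nat.stirlingFirst n i : K) *
        (i.choose j : K) * l ^ (i - j) * 2 ^ (n - j) * y ^ j =
      2 ^ n * n ! * Ring.choose (y / 2 + l) n := by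
  rw [mul_assoc, ← descPochhammer_eval_eq_factorial_mul_choose,
    descPochhammer_eval_eq_sum_stirlingFirst, mul_sum]
  refine sum_congr rfl fun i hi => ?_
  rw [mul_left_comm, ← sum_choose_mul_pow_mul_two_pow y l (Nat.le_of_lt_succ (mem_range.mp hi)),
    mul_sum]
  refine sum_congr rfl fun j _ => ?_
  ring

theorem factorial_mul_sum_stirling_eq_fwdDiff_iter (m n : ℕ) (l : K) :
    (m ! : K) * ∑ i ∈ Icc m n, ∑ j ∈ Icc m i, (-1) ^ (n + i) * (Nat.stirlingFirst n i : K) *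
        (i.choose j : K) * (Nat.stirlingSecond j m : K) * l ^ (i - j) * 2 ^ (n - j) =
      2 ^ n * n ! * Δ_[1] ^[m] (fun y : K => Ring.choose (y / 2 + l) n) 0 := by
  rw [sum_Icc_eq_sum_range_of_eq_zero n fun i hi => sum_eq_zero fun j hj => absurd
    ((mem_Icc.mp hj).1.trans (mem_Icc.mp hj).2) (not_le.mpr hi)]
  simp (contextual := true) only [sum_Icc_eq_sum_range_of_eq_zero, Nat.stirlingSecond_eq_zero_of_lt,
    Nat.cast_zero, mul_zero, zero_mul, implies_true]
  rw [← fwdDiff_iter_const_mul_apply]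
  simp_rw [← sum_stirlingFirst_mul_sum_choose, fwdDiff_iter_sum_apply, fwdDiff_iter_const_mul_apply,
    fwdDiff_iter_pow_apply_zero, mul_sum]
  refine sum_congr rfl fun i _ => sum_congr rfl fun j _ => ?_
  ring

theorem fwdDiff_iter_choose_half_add_apply_zero (m n : ℕ) (l : K) :
    Δ_[1] ^[m] (fun y : K => Ring.choose (y / 2 + l) n) 0 =
      ∑ x ∈ Icc m n, Ring.choose l (n - x) * Δ_[1] ^[m] (fun y : K => Ring.choose (y / 2) x) 0 := by
  have hvandermonde : (fun y : K => Ring.choose (y / 2 + l) n) = fun y =>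
      ∑ x ∈ range (n + 1), Ring.choose l (n - x) * Ring.choose (y / 2) x := by
    funext y
    rw [Ring.add_choose_eq n (Commute.all _ _), Nat.sum_antidiagonal_eq_sum_range_succ
      (fun i j => Ring.choose (y / 2) i * Ring.choose l j)]
    simp only [mul_comm]
  rw [hvandermonde, fwdDiff_iter_sum_apply]
  simp_rw [fwdDiff_iter_const_mul_apply]
  exact (sum_Icc_eq_sum_range_of_eq_zero n fun x hx => by
    rw [fwdDiff_iter_choose_half_of_lt hx, mul_zero]).symm

end FieldCharZero

theorem stmt15_general (m n : ℕ) (hm : 1 ≤ m) (l : ℚ) :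
    ∑ i ∈ Finset.Icc m n, ∑ j ∈ Finset.Icc m i,
        (-1 : ℚ) ^ (n + i) * stirling1 n i * i.choose j * stirling2 j m *
          l ^ (i - j) * 2 ^ (n - j) =
      (n.factorial : ℚ) / m.factorial *
        ∑ x ∈ Finset.Icc m n, (m : ℚ) / x * gchoose l (n - x) *
          gchoose (-(x : ℚ)) (x - m) * (2 : ℚ) ^ ((m : ℤ) + n - 2 * x) := by
  rw [stirling1_eq_stirlingFirst, stirling2_eq_stirlingSecond]
  simp only [gchoose_eq_choose]
  apply mul_left_cancel₀ (by positivity : (m ! : ℚ) ≠ 0)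
  rw [factorial_mul_sum_stirling_eq_fwdDiff_iter, fwdDiff_iter_choose_half_add_apply_zero, mul_sum,
    mul_sum, mul_sum]
  refine sum_congr rfl fun x hx => ?_
  rw [fwdDiff_iter_choose_half_apply_zero hm (mem_Icc.mp hx).1,
    show (m : ℤ) + n - 2 * x = n + (m - 2 * x) by ring, zpow_add₀ two_ne_zero, zpow_natCast]
  field_simp

theorem stmt15 (m n : ℕ) (hm : 1 ≤ m) (hmn : m ≤ n) (l : ℚ) :
    ∑ i ∈ Finset.Icc m n, ∑ j ∈ Finset.Icc m i,
        (-1 : ℚ) ^ (n + i) * stirling1 n i * i.choose j * stirling2 j m *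
          l ^ (i - j) * 2 ^ (n - j) =
      (n.factorial : ℚ) / m.factorial *
        ∑ x ∈ Finset.Icc m n, (m : ℚ) / x * gchoose l (n - x) *
          gchoose (-(x : ℚ)) (x - m) * (2 : ℚ) ^ ((m : ℤ) + n - 2 * x) :=
  stmt15_general m n hm l
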